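/- Let G₁, G₂ be graphs with minimum degrees δ₁, δ₂ and S ⊆ V₁ × V₂. If the projection of S onto V_i is a powerful k_i-alliance free set in G_i for each i ∈ {1,2}, then S is a powerful k-alliance free set in G₁ □ G₂ for k = max{k₁ + k₂ − 1, min{k₂ − δ₁, k₁ − δ₂}}. -/

import Mathlib

open Classical

/-- Number of neighbors of `v` inside `S`. -/
noncomputable def dS {V : Type*} (G : SimpleGraph V) (S : Set V) (v : V) : ℕ :=
  {u ∈ S | G.Adj v u}.ncard

/-- `S` is a defensive `k`-alliance. -/
def IsDefAlliance {V : Type*} (G : SimpleGraph V) (k : ℤ) (S : Set V) : Prop :=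
  S.Nonempty ∧ ∀ v ∈ S, (dS G S v : ℤ) ≥ (dS G Sᶜ v : ℤ) + k

/-- `X` is a defensive `k`-alliance free set. -/
def IsDafFree {V : Type*} (G : SimpleGraph V) (k : ℤ) (X : Set V) : Prop :=
  ∀ S : Set V, S ⊆ X → ¬ IsDefAlliance G k S

/-- Boundary: vertices outside `S` with a neighbor in `S`. -/
def obdry {V : Type*} (G : SimpleGraph V) (S : Set V) : Set V :=
  {v | v ∉ S ∧ ∃ u ∈ S, G.Adj v u}

/-- `S` is an offensive `k`-alliance. -/
def IsOffAlliance {V : Type*} (G : SimpleGraph V) (k : ℤ) (S : Set V) : Prop :=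
  S.Nonempty ∧ ∀ v ∈ obdry G S, (dS G S v : ℤ) ≥ (dS G Sᶜ v : ℤ) + k

/-- `X` is an offensive `k`-alliance free set. -/
def IsOafFree {V : Type*} (G : SimpleGraph V) (k : ℤ) (X : Set V) : Prop :=
  ∀ S : Set V, S ⊆ X → ¬ IsOffAlliance G k S

/-- `S` is a powerful `k`-alliance. -/
def IsPowAlliance {V : Type*} (G : SimpleGraph V) (k : ℤ) (S : Set V) : Prop :=
  IsDefAlliance G k S ∧ IsOffAlliance G (k + 2) S

/-- `X` is a powerful `k`-alliance free set. -/
def IsPafFree {V : Type*} (G : SimpleGraph V) (k : ℤ) (X : Set V) : Prop :=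
  ∀ S : Set V, S ⊆ X → ¬ IsPowAlliance G k S

/-- Maximum cardinality of a defensive `k`-alliance free set. -/
noncomputable def phiD {V : Type*} (G : SimpleGraph V) (k : ℤ) : ℕ :=
  sSup {n : ℕ | ∃ X : Set V, IsDafFree G k X ∧ X.ncard = n}

/-- Maximum cardinality of an offensive `k`-alliance free set. -/
noncomputable def phiO {V : Type*} (G : SimpleGraph V) (k : ℤ) : ℕ :=
  sSup {n : ℕ | ∃ X : Set V, IsOafFree G k X ∧ X.ncard = n}

/-- Maximum cardinality of a powerful `k`-alliance free set. -/
noncomputable def phiP {V : Type*} (G : SimpleGraph V) (k : ℤ) : ℕ :=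
  sSup {n : ℕ | ∃ X : Set V, IsPafFree G k X ∧ X.ncard = n}

/-!
Neighbour counts in `G₁ □ G₂` split into a row part and a column part, so for a powerful
`k`-alliance `T ⊆ S` with `k ≥ k₁ + k₂ - 1` and `k ≥ k₂ - δ₁` there are two cases. If some
`v ∈ π₂(T)` has `2 d_{π₂ T}(v) < deg v + k₂`, the column deficit at `v` is small enough for the
row `{a | (a, v) ∈ T} ⊆ π₁(S)` to be a powerful `k₁`-alliance of `G₁`. Otherwise `π₂(T)` is a
defensive `k₂`-alliance of `G₂`; it is also offensive, since a boundary vertex `v` of `π₂(T)`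
lifts to a boundary vertex `(u, v)` of `T` whose row meets `T` nowhere, and the missing row
neighbours cost at most `deg u`, which is at least `δ₁`. The case `k ≥ k₁ - δ₂` follows from
`G₁ □ G₂ ≃g G₂ □ G₁`.
-/

open SimpleGraph

section Degrees

variable {V : Type*} (G : SimpleGraph V)

lemma dS_mono [Finite V] {S T : Set V} (h : S ⊆ T) (v : V) : dS G S v ≤ dS G T v :=
  Set.ncard_le_ncard (fun _ hu => ⟨h hu.1, hu.2⟩)

lemma dS_empty (v : V) : dS G ∅ v = 0 := by
  simp [dS]

lemma dS_add_dS_compl [Fintype V] [DecidableRel G.Adj] (S : Set V) (v : V) :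
    dS G S v + dS G Sᶜ v = G.degree v := by
  have h := Set.ncard_inter_add_ncard_sdiff_eq_ncard (G.neighborSet v) S
  rw [Set.ncard_eq_toFinset_card' (G.neighborSet v), ← neighborFinset_def,
    card_neighborFinset_eq_degree] at h
  rw [← h, dS, dS]
  congr 2 <;> ext u <;> simp [and_comm]

lemma dS_compl_add_le_dS_iff [Fintype V] [DecidableRel G.Adj] (S : Set V) (v : V) (k : ℤ) :
    (dS G Sᶜ v : ℤ) + k ≤ dS G S v ↔ G.degree v + k ≤ 2 * (dS G S v : ℤ) := by
  have := dS_add_dS_compl G S v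
  omega

end Degrees

section BoxProd

variable {V₁ V₂ : Type*} (G₁ : SimpleGraph V₁) (G₂ : SimpleGraph V₂)

lemma dS_boxProd [Finite V₁] [Finite V₂] (T : Set (V₁ × V₂)) (u : V₁) (v : V₂) :
    dS (G₁ □ G₂) T (u, v) = dS G₁ {a | (a, v) ∈ T} u + dS G₂ {b | (u, b) ∈ T} v := by
  have hsplit : {p ∈ T | (G₁ □ G₂).Adj (u, v) p}
      = (·, v) '' {a ∈ {a | (a, v) ∈ T} | G₁.Adj u a}
        ∪ (u, ·) '' {b ∈ {b | (u, b) ∈ T} | G₂.Adj v b} := by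
    ext ⟨a, b⟩
    simp only [boxProd_adj, Set.mem_union, Set.mem_image, Set.mem_ofPred_eq,
      Prod.mk.injEq]
    constructor
    · rintro ⟨hT, ⟨hadj, rfl⟩ | ⟨hadj, rfl⟩⟩
      · exact .inl ⟨a, ⟨hT, hadj⟩, rfl, rfl⟩
      · exact .inr ⟨b, ⟨hT, hadj⟩, rfl, rfl⟩
    · rintro (⟨a, ⟨hT, hadj⟩, rfl, rfl⟩ | ⟨b, ⟨hT, hadj⟩, rfl, rfl⟩)
      · exact ⟨hT, .inl ⟨hadj, rfl⟩⟩
      · exact ⟨hT, .inr ⟨hadj, rfl⟩⟩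
  have hdisj : Disjoint ((·, v) '' {a ∈ {a | (a, v) ∈ T} | G₁.Adj u a})
      ((u, ·) '' {b ∈ {b | (u, b) ∈ T} | G₂.Adj v b}) := by
    rw [Set.disjoint_left]
    rintro _ ⟨a, ⟨-, hadj⟩, rfl⟩ ⟨b, -, hab⟩
    obtain ⟨rfl, -⟩ := Prod.mk.inj hab
    exact G₁.irrefl hadj
  rw [dS, hsplit, Set.ncard_union_eq hdisj,
    Set.ncard_image_of_injective _ (Prod.mk_left_injective v),
    Set.ncard_image_of_injective _ (Prod.mk_right_injective u)]
  rfl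

lemma dS_fiber_le_dS_snd_image [Finite V₂] (T : Set (V₁ × V₂)) (u : V₁) (v : V₂) :
    dS G₂ {b | (u, b) ∈ T} v ≤ dS G₂ (Prod.snd '' T) v :=
  dS_mono G₂ (T := Prod.snd '' T) (fun b hb => ⟨(u, b), hb, rfl⟩) v

variable [Fintype V₁] [Fintype V₂] [DecidableRel G₁.Adj] [DecidableRel G₂.Adj]

lemma dS_compl_add_le_dS_boxProd_iff (T : Set (V₁ × V₂)) (u : V₁) (v : V₂) (k : ℤ) :
    (dS (G₁ □ G₂) Tᶜ (u, v) : ℤ) + k ≤ dS (G₁ □ G₂) T (u, v) ↔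
      G₁.degree u + G₂.degree v + k ≤
        2 * (dS G₁ {a | (a, v) ∈ T} u : ℤ) + 2 * (dS G₂ {b | (u, b) ∈ T} v : ℤ) := by
  have h₁ := dS_add_dS_compl G₁ {a | (a, v) ∈ T} u
  have h₂ := dS_add_dS_compl G₂ {b | (u, b) ∈ T} v
  rw [dS_boxProd, dS_boxProd]
  change (dS G₁ {a | (a, v) ∈ T}ᶜ u + dS G₂ {b | (u, b) ∈ T}ᶜ v : ℕ) + k ≤ _ ↔ _
  omega

variable {G₁ G₂} {T : Set (V₁ × V₂)} {k k₁ k₂ : ℤ}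

lemma IsPowAlliance.fiber_fst (hT : IsPowAlliance (G₁ □ G₂) k T) (hk : k₁ + k₂ - 1 ≤ k)
    {v : V₂} (hv : {a | (a, v) ∈ T}.Nonempty)
    (hsparse : 2 * (dS G₂ (Prod.snd '' T) v : ℤ) < G₂.degree v + k₂) :
    IsPowAlliance G₁ k₁ {a | (a, v) ∈ T} := by
  obtain ⟨⟨-, hdef⟩, -, hoff⟩ := hT
  refine ⟨⟨hv, fun u hu => ?_⟩, hv, ?_⟩
  · have hbox := (dS_compl_add_le_dS_boxProd_iff G₁ G₂ T u v k).1 (hdef (u, v) hu)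
    have hcol := dS_fiber_le_dS_snd_image G₂ T u v
    rw [ge_iff_le, dS_compl_add_le_dS_iff]
    omega
  · rintro u ⟨hu, w, hw, hadj⟩
    have hbdry : (u, v) ∈ obdry (G₁ □ G₂) T := ⟨hu, (w, v), hw, .inl ⟨hadj, rfl⟩⟩
    have hbox := (dS_compl_add_le_dS_boxProd_iff G₁ G₂ T u v _).1 (hoff _ hbdry)
    have hcol := dS_fiber_le_dS_snd_image G₂ T u v
    rw [ge_iff_le, dS_compl_add_le_dS_iff]
    omega

lemma IsOffAlliance.snd_image (hT : IsOffAlliance (G₁ □ G₂) (k + 2) T)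
    (hk : k₂ - G₁.minDegree ≤ k) : IsOffAlliance G₂ (k₂ + 2) (Prod.snd '' T) := by
  refine ⟨hT.1.image _, ?_⟩
  rintro v ⟨hv, _, ⟨⟨u, b⟩, hub, rfl⟩, hadj⟩
  have hbdry : (u, v) ∈ obdry (G₁ □ G₂) T :=
    ⟨fun h => hv ⟨_, h, rfl⟩, (u, b), hub, .inr ⟨hadj, rfl⟩⟩
  have hfiber : {a | (a, v) ∈ T} = ∅ :=
    Set.eq_empty_of_forall_notMem fun a ha => hv ⟨(a, v), ha, rfl⟩
  have hbox := (dS_compl_add_le_dS_boxProd_iff G₁ G₂ T u v _).1 (hT.2 _ hbdry)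
  rw [hfiber, dS_empty] at hbox
  have hcol := dS_fiber_le_dS_snd_image G₂ T u v
  have hmin := G₁.minDegree_le_degree u
  rw [ge_iff_le, dS_compl_add_le_dS_iff]
  omega

lemma IsPowAlliance.snd_image_or_fiber_fst (hT : IsPowAlliance (G₁ □ G₂) k T)
    (hk₁ : k₁ + k₂ - 1 ≤ k) (hk₂ : k₂ - G₁.minDegree ≤ k) :
    IsPowAlliance G₂ k₂ (Prod.snd '' T) ∨ ∃ v, IsPowAlliance G₁ k₁ {a | (a, v) ∈ T} := by
  by_cases hfiber : ∃ v, IsPowAlliance G₁ k₁ {a | (a, v) ∈ T}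
  · exact .inr hfiber
  refine .inl ⟨⟨hT.1.1.image _, ?_⟩, hT.2.snd_image hk₂⟩
  rintro _ ⟨p, hp, rfl⟩
  have hdense : ¬ 2 * (dS G₂ (Prod.snd '' T) p.2 : ℤ) < G₂.degree p.2 + k₂ := fun h =>
    hfiber ⟨p.2, hT.fiber_fst hk₁ ⟨p.1, hp⟩ h⟩
  rw [ge_iff_le, dS_compl_add_le_dS_iff]
  omega

lemma isPafFree_boxProd_of_minDegree_left {S : Set (V₁ × V₂)}
    (h₁ : IsPafFree G₁ k₁ (Prod.fst '' S)) (h₂ : IsPafFree G₂ k₂ (Prod.snd '' S))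
    (hk₁ : k₁ + k₂ - 1 ≤ k) (hk₂ : k₂ - G₁.minDegree ≤ k) : IsPafFree (G₁ □ G₂) k S := by
  intro T hTS hT
  rcases hT.snd_image_or_fiber_fst hk₁ hk₂ with h | ⟨v, h⟩
  · exact h₂ _ (Set.image_mono hTS) h
  · exact h₁ _ (fun a ha => ⟨(a, v), hTS ha, rfl⟩) h

end BoxProd

section Iso

variable {V W : Type*} {G : SimpleGraph V} {H : SimpleGraph W} (e : G ≃g H)

lemma dS_preimage_iso (S : Set W) (v : V) : dS G (e ⁻¹' S) v = dS H S (e v) := by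
  have h : {u ∈ e ⁻¹' S | G.Adj v u} = e ⁻¹' {w ∈ S | H.Adj (e v) w} := by
    ext u
    simp [e.map_adj_iff]
  rw [dS, h, Set.ncard_preimage_of_injective_subset_range e.injective
    (by simp [e.surjective.range_eq])]
  rfl

lemma obdry_preimage_iso (S : Set W) : obdry G (e ⁻¹' S) = e ⁻¹' obdry H S := by
  ext v
  simp only [obdry, Set.mem_ofPred_eq, Set.mem_preimage, e.surjective.exists, e.map_adj_iff]

variable {e} {k : ℤ}

lemma IsPowAlliance.preimage_iso {S : Set W} (h : IsPowAlliance H k S) :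
    IsPowAlliance G k (e ⁻¹' S) := by
  obtain ⟨⟨hne, hdef⟩, -, hoff⟩ := h
  have hne' : (e ⁻¹' S).Nonempty := hne.preimage e.surjective
  refine ⟨⟨hne', fun v hv => ?_⟩, hne', fun v hv => ?_⟩
  · rw [← Set.preimage_compl, dS_preimage_iso, dS_preimage_iso]
    exact hdef _ hv
  · rw [obdry_preimage_iso] at hv
    rw [← Set.preimage_compl, dS_preimage_iso, dS_preimage_iso]
    exact hoff _ hv

lemma IsPafFree.of_preimage_iso {X : Set W} (h : IsPafFree G k (e ⁻¹' X)) : IsPafFree H k X :=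
  fun _ hTX hT => h _ (Set.preimage_mono hTX) hT.preimage_iso

end Iso

lemma isPafFree_boxProd_of_minDegree_right {V₁ V₂ : Type*} [Fintype V₁] [Fintype V₂]
    {G₁ : SimpleGraph V₁} {G₂ : SimpleGraph V₂} [DecidableRel G₁.Adj] [DecidableRel G₂.Adj]
    {k k₁ k₂ : ℤ} {S : Set (V₁ × V₂)}
    (h₁ : IsPafFree G₁ k₁ (Prod.fst '' S)) (h₂ : IsPafFree G₂ k₂ (Prod.snd '' S))
    (hk₁ : k₁ + k₂ - 1 ≤ k) (hk₂ : k₁ - G₂.minDegree ≤ k) : IsPafFree (G₁ □ G₂) k S := by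
  have hswap : IsPafFree (G₂ □ G₁) k (Prod.swap ⁻¹' S) :=
    isPafFree_boxProd_of_minDegree_left
      (by rwa [← Set.image_swap_eq_preimage_swap, Set.image_image])
      (by rwa [← Set.image_swap_eq_preimage_swap, Set.image_image]) (by omega) hk₂
  exact hswap.of_preimage_iso (e := boxProdComm G₂ G₁)

theorem stmt18_general {V₁ V₂ : Type*} [Fintype V₁] [Fintype V₂]
    (G₁ : SimpleGraph V₁) (G₂ : SimpleGraph V₂)
    [DecidableRel G₁.Adj] [DecidableRel G₂.Adj]
    (k₁ k₂ : ℤ) (S : Set (V₁ × V₂))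
    (h₁ : IsPafFree G₁ k₁ (Prod.fst '' S))
    (h₂ : IsPafFree G₂ k₂ (Prod.snd '' S)) :
    IsPafFree (G₁.boxProd G₂)
      (max (k₁ + k₂ - 1) (min (k₂ - (G₁.minDegree : ℤ)) (k₁ - (G₂.minDegree : ℤ)))) S := by
  have hk₁ := le_max_left (k₁ + k₂ - 1) (min (k₂ - (G₁.minDegree : ℤ)) (k₁ - G₂.minDegree))
  rcases min_le_iff.1 (le_max_right (k₁ + k₂ - 1) _) with hk₂ | hk₂
  · exact isPafFree_boxProd_of_minDegree_left h₁ h₂ hk₁ hk₂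
  · exact isPafFree_boxProd_of_minDegree_right h₁ h₂ hk₁ hk₂

theorem stmt18 {V₁ V₂ : Type*} [Fintype V₁] [Fintype V₂] [Nonempty V₁] [Nonempty V₂]
    (G₁ : SimpleGraph V₁) (G₂ : SimpleGraph V₂)
    [DecidableRel G₁.Adj] [DecidableRel G₂.Adj]
    (k₁ k₂ : ℤ) (S : Set (V₁ × V₂))
    (h₁ : IsPafFree G₁ k₁ (Prod.fst '' S))
    (h₂ : IsPafFree G₂ k₂ (Prod.snd '' S)) :
    IsPafFree (G₁.boxProd G₂)
      (max (k₁ + k₂ - 1) (min (k₂ - (G₁.minDegree : ℤ)) (k₁ - (G₂.minDegree : ℤ)))) S :=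
  stmt18_general G₁ G₂ k₁ k₂ S h₁ h₂
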